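/- Let \(\mathcal{D}\) be a quasi-symmetric 2-(v,k,\u03bb) design with b blocks, replication number r (every point lies in exactly r blocks), and intersection numbers x and y, where \(v \equiv 5 \pmod 8\), \(k \equiv 1 \pmod 4\), and x, y are odd. Let C be a doubly even self-dual code of length v+3 containing the linear span \(C_3\) of the vectors \((\chi_B, 1, 1, 1)\) over the blocks B of \(\mathcal{D}\). Then every nonzero codeword of C has weight at least \((b+r)/r\), i.e., \(r \cdot \mathrm{wt}(c) \ge b + r\) for all nonzero \(c \in C\). -/

import Mathlib

/-! Write `c = (c₀, c')`, let `S` be the support of `c₀` and `t = wt c'`. Orthogonality to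
`(χ_B, 1, 1, 1)` makes `#(S ∩ B) + t` even for every block `B`.

If `t` is odd, every block meets `S`, so counting incidences gives `b ≤ r #S`, and `r ≤ r t`.

If `t` is even, `S` is nonempty because `C` is doubly even and `t ≤ 3`. Every block through a
point `p ∈ S` meets `S` evenly, hence meets `S \ {p}`, and counting pairs gives `r ≤ λ (#S - 1)`.
Together with `λ b ≤ r²`, which amounts to `k ≤ v`, this yields `b ≤ r (#S - 1)`. -/

/-- The weight of a binary vector: its number of nonzero coordinates. -/
def wt {ι : Type*} [Fintype ι] (x : ι → ZMod 2) : ℕ :=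
  (Finset.univ.filter fun i => x i ≠ 0).card

/-- The characteristic vector of a block. -/
def chi {v : ℕ} (b : Finset (Fin v)) : Fin v → ZMod 2 :=
  fun i => if i ∈ b then 1 else 0

/-- The generator `(χ_B, 1, 1, 1)` of the code `C₃ ⊆ 𝔽₂^{v+3}`. -/
def gen3 {v : ℕ} (b : Finset (Fin v)) : Fin v ⊕ Fin 3 → ZMod 2 :=
  Sum.elim (chi b) fun _ => 1

open Finset

section Design

variable {α : Type*} [DecidableEq α] {𝓑 : Finset (Finset α)} {k lam r : ℕ}

theorem card_le_card_mul_of_forall_inter_nonempty {T : Finset α} {n : ℕ}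
    (hn : ∀ a ∈ T, #{B ∈ 𝓑 | a ∈ B} ≤ n) (hmeet : ∀ B ∈ 𝓑, (T ∩ B).Nonempty) :
    #𝓑 ≤ #T * n :=
  calc #𝓑 = ∑ _B ∈ 𝓑, 1 := card_eq_sum_ones 𝓑
    _ ≤ ∑ B ∈ 𝓑, #(T ∩ B) := sum_le_sum fun B hB => (hmeet B hB).card_pos
    _ ≤ #T * n := sum_card_inter_le hn

theorem card_blocks_through_pair
    (hlam : ∀ T : Finset α, T.card = 2 → (𝓑.filter fun b => T ⊆ b).card = lam)
    {p q : α} (hpq : p ≠ q) : #{B ∈ 𝓑.filter (p ∈ ·) | q ∈ B} = lam := by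
  rw [← hlam {p, q} (card_pair hpq), filter_filter]
  simp only [insert_subset_iff, singleton_subset_iff]

variable [Fintype α]

theorem card_mul_eq_card_mul_replication (hk : ∀ b ∈ 𝓑, b.card = k)
    (hr : ∀ p : α, (𝓑.filter fun b => p ∈ b).card = r) :
    #𝓑 * k = Fintype.card α * r := by
  rw [← sum_card hr, sum_const_nat hk]

theorem lam_mul_card_sub_one (hk : ∀ b ∈ 𝓑, b.card = k)
    (hlam : ∀ T : Finset α, T.card = 2 → (𝓑.filter fun b => T ⊆ b).card = lam)
    (hr : ∀ p : α, (𝓑.filter fun b => p ∈ b).card = r) (p : α) :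
    lam * (Fintype.card α - 1) = r * (k - 1) := by
  have hsum := sum_card_inter (s := univ.erase p) (B := 𝓑.filter (p ∈ ·)) (n := lam)
    fun q hq => card_blocks_through_pair hlam (ne_of_mem_erase hq).symm
  have hterm : ∀ B ∈ 𝓑.filter (p ∈ ·), #(univ.erase p ∩ B) = k - 1 := by
    intro B hB
    rw [mem_filter] at hB
    rw [erase_inter, univ_inter, card_erase_of_mem hB.2, hk B hB.1]
  rw [sum_const_nat hterm, hr p, card_erase_of_mem (mem_univ p), card_univ] at hsum
  rw [mul_comm, ← hsum]

theorem lam_mul_card_le_sq (hk : ∀ b ∈ 𝓑, b.card = k)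
    (hlam : ∀ T : Finset α, T.card = 2 → (𝓑.filter fun b => T ⊆ b).card = lam)
    (hr : ∀ p : α, (𝓑.filter fun b => p ∈ b).card = r)
    (hv : 2 ≤ Fintype.card α) (hk1 : 1 ≤ k) :
    lam * #𝓑 ≤ r * r := by
  obtain h𝓑 | ⟨B, hB⟩ := 𝓑.eq_empty_or_nonempty
  · simp [h𝓑]
  have hkv : k ≤ Fintype.card α := hk B hB ▸ card_le_univ B
  obtain ⟨p⟩ : Nonempty α := Fintype.card_pos_iff.mp (by omega)
  have hbk := card_mul_eq_card_mul_replication hk hr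
  have hlv := lam_mul_card_sub_one hk hlam hr p
  obtain ⟨v', hv'⟩ : ∃ v', Fintype.card α = v' + 1 := ⟨Fintype.card α - 1, by omega⟩
  obtain ⟨k', rfl⟩ : ∃ k', k = k' + 1 := ⟨k - 1, by omega⟩
  rw [hv'] at hbk hlv hkv
  simp only [Nat.add_sub_cancel] at hlv
  -- multiplied by `k (v - 1)`, the bound becomes `r² v (k - 1) ≤ r² k (v - 1)`, i.e. `k ≤ v`
  have hpos : 0 < (k' + 1) * v' := Nat.mul_pos (by omega) (by omega)
  refine le_of_mul_le_mul_right ?_ hpos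
  calc lam * #𝓑 * ((k' + 1) * v') = (#𝓑 * (k' + 1)) * (lam * v') := by ring
    _ = r * r * ((v' + 1) * k') := by rw [hbk, hlv]; ring
    _ ≤ r * r * ((k' + 1) * v') := Nat.mul_le_mul_left _ (by nlinarith)

theorem card_add_le_mul_card_of_even_card_inter (hk : ∀ b ∈ 𝓑, b.card = k)
    (hlam : ∀ T : Finset α, T.card = 2 → (𝓑.filter fun b => T ⊆ b).card = lam)
    (hr : ∀ p : α, (𝓑.filter fun b => p ∈ b).card = r)
    (hv : 2 ≤ Fintype.card α) (hk1 : 1 ≤ k) {S : Finset α} (hS : S.Nonempty)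
    (heven : ∀ B ∈ 𝓑, Even #(S ∩ B)) :
    #𝓑 + r ≤ r * #S := by
  obtain ⟨p, hp⟩ := hS
  -- a block through `p` meets `S` in an even, hence at least two, number of points
  have hmeet : ∀ B ∈ 𝓑.filter (p ∈ ·), (S.erase p ∩ B).Nonempty := by
    intro B hB
    rw [mem_filter] at hB
    have hpSB : p ∈ S ∩ B := mem_inter.mpr ⟨hp, hB.2⟩
    have hpos := card_pos.mpr ⟨p, hpSB⟩
    obtain ⟨m, hm⟩ := heven B hB.1
    rw [← card_pos, erase_inter, card_erase_of_mem hpSB]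
    omega
  have hr_le : r ≤ (#S - 1) * lam := by
    rw [← hr p, ← card_erase_of_mem hp]
    exact card_le_card_mul_of_forall_inter_nonempty
      (fun q hq => (card_blocks_through_pair hlam (ne_of_mem_erase hq).symm).le) hmeet
  have hS1 : 1 ≤ #S := card_pos.mpr ⟨p, hp⟩
  obtain rfl | hlam0 := Nat.eq_zero_or_pos lam
  · have hbk := card_mul_eq_card_mul_replication hk hr
    simp only [mul_zero, nonpos_iff_eq_zero] at hr_le
    subst hr_le
    simp only [mul_zero, Nat.mul_eq_zero] at hbk
    omega
  have hb : #𝓑 ≤ r * (#S - 1) := by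
    refine le_of_mul_le_mul_left ?_ hlam0
    calc lam * #𝓑 ≤ r * r := lam_mul_card_le_sq hk hlam hr hv hk1
      _ ≤ r * ((#S - 1) * lam) := by gcongr
      _ = lam * (r * (#S - 1)) := by ring
  calc #𝓑 + r ≤ r * (#S - 1) + r := by omega
    _ = r * #S := by rw [← Nat.mul_add_one, Nat.sub_add_cancel hS1]

end Design

section Code

variable {ι : Type*} [Fintype ι]

def supp (x : ι → ZMod 2) : Finset ι :=
  univ.filter fun i => x i ≠ 0

theorem wt_eq_zero_iff {x : ι → ZMod 2} : wt x = 0 ↔ x = 0 := by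
  simp [wt, funext_iff, filter_eq_empty_iff]

theorem wt_eq_wt_comp_inl_add_wt_comp_inr {κ : Type*} [Fintype κ] (x : ι ⊕ κ → ZMod 2) :
    wt x = wt (x ∘ Sum.inl) + wt (x ∘ Sum.inr) := by
  simp only [wt, card_filter, Fintype.sum_sum_type, Function.comp_apply]

theorem sum_eq_wt (x : ι → ZMod 2) : ∑ i, x i = (wt x : ZMod 2) := by
  have h01 : ∀ a : ZMod 2, a = ((if a ≠ 0 then 1 else 0 : ℕ) : ZMod 2) := by decide
  rw [wt, card_filter, Nat.cast_sum]
  exact sum_congr rfl fun i _ => h01 (x i)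

theorem sum_mul_chi {v : ℕ} (x : Fin v → ZMod 2) (B : Finset (Fin v)) :
    ∑ i, x i * chi B i = (#(supp x ∩ B) : ZMod 2) := by
  rw [sum_eq_wt, wt]
  congr 2
  ext i
  by_cases hi : i ∈ B <;> simp [supp, chi, hi]

theorem sum_mul_gen3 {v : ℕ} (c : Fin v ⊕ Fin 3 → ZMod 2) (B : Finset (Fin v)) :
    ∑ i, c i * gen3 B i = ((#(supp (c ∘ Sum.inl) ∩ B) + wt (c ∘ Sum.inr) : ℕ) : ZMod 2) := by
  simp only [Fintype.sum_sum_type, gen3, Sum.elim_inl, Sum.elim_inr, mul_one, Nat.cast_add]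
  rw [sum_mul_chi, ← sum_eq_wt]
  rfl

theorem supp_comp_inl_nonempty {κ : Type*} [Fintype κ] (hκ : Fintype.card κ < 4)
    {x : ι ⊕ κ → ZMod 2} (hx : x ≠ 0) (h4 : 4 ∣ wt x) : (supp (x ∘ Sum.inl)).Nonempty := by
  rw [nonempty_iff_ne_empty]
  intro hS
  have hwt : wt x = wt (x ∘ Sum.inr) := by
    rw [wt_eq_wt_comp_inl_add_wt_comp_inr, add_eq_right]
    exact card_eq_zero.mpr hS
  have hκ' : wt (x ∘ Sum.inr) ≤ Fintype.card κ := card_le_univ _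
  exact hx (wt_eq_zero_iff.mp (by omega))

end Code

theorem selfdual_containing_C3_min_weight_general (v k lam r : ℕ)
    (𝓑 : Finset (Finset (Fin v)))
    (hk : ∀ b ∈ 𝓑, b.card = k)
    (hlam : ∀ T : Finset (Fin v), T.card = 2 → (𝓑.filter fun b => T ⊆ b).card = lam)
    (hr : ∀ p : Fin v, (𝓑.filter fun b => p ∈ b).card = r)
    (hvmod : v % 8 = 5) (hkmod : k % 4 = 1)
    (C : Submodule (ZMod 2) (Fin v ⊕ Fin 3 → ZMod 2))
    (hselfdual : ∀ z : Fin v ⊕ Fin 3 → ZMod 2,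
      z ∈ C ↔ ∀ c ∈ C, ∑ i, z i * c i = 0)
    (hde : ∀ c ∈ C, 4 ∣ wt c)
    (hsub : Submodule.span (ZMod 2) (gen3 '' (𝓑 : Set (Finset (Fin v)))) ≤ C) :
    ∀ c ∈ C, c ≠ 0 → 𝓑.card + r ≤ r * wt c := by
  intro c hc hc0
  set S := supp (c ∘ Sum.inl)
  set t := wt (c ∘ Sum.inr)
  have hv : 2 ≤ Fintype.card (Fin v) := by rw [Fintype.card_fin]; omega
  have hk1 : 1 ≤ k := by omega
  have horth : ∀ B ∈ 𝓑, Even (#(S ∩ B) + t) := fun B hB => by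
    rw [← ZMod.natCast_eq_zero_iff_even, ← sum_mul_gen3]
    exact (hselfdual c).mp hc _ (hsub (Submodule.subset_span ⟨B, hB, rfl⟩))
  rw [wt_eq_wt_comp_inl_add_wt_comp_inr c]
  rcases Nat.even_or_odd t with ht | ht
  · have hS : S.Nonempty := supp_comp_inl_nonempty (by simp) hc0 (hde c hc)
    calc #𝓑 + r ≤ r * #S := card_add_le_mul_card_of_even_card_inter hk hlam hr hv hk1 hS
          fun B hB => (Nat.even_add.mp (horth B hB)).mpr ht
      _ ≤ r * (#S + t) := Nat.mul_le_mul_left r (Nat.le_add_right _ _)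
  · have hmeet : ∀ B ∈ 𝓑, (S ∩ B).Nonempty := fun B hB =>
      card_pos.mp ((Nat.even_add'.mp (horth B hB)).mpr ht).pos
    calc #𝓑 + r ≤ #S * r + r * t := add_le_add
          (card_le_card_mul_of_forall_inter_nonempty (fun a _ => (hr a).le) hmeet)
          (Nat.le_mul_of_pos_right r ht.pos)
      _ = r * (#S + t) := by ring

/-- Let `𝓑` be the block set of a quasi-symmetric 2-(v,k,λ) design with `b` blocks,
replication number `r` and intersection numbers `x`, `y`, where `v ≡ 5 (mod 8)`,
`k ≡ 1 (mod 4)` and `x`, `y` are odd.  If `C` is a doubly even self-dual code of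
length `v+3` containing the span `C₃` of the vectors `(χ_B, 1, 1, 1)`, then every
nonzero codeword `c` of `C` satisfies `r · wt(c) ≥ b + r`, i.e. the minimum weight
of `C` is at least `(b + r)/r`. -/
theorem selfdual_containing_C3_min_weight (v k lam r x y : ℕ)
    (𝓑 : Finset (Finset (Fin v)))
    (hk : ∀ b ∈ 𝓑, b.card = k)
    (hlam : ∀ T : Finset (Fin v), T.card = 2 → (𝓑.filter fun b => T ⊆ b).card = lam)
    (hr : ∀ p : Fin v, (𝓑.filter fun b => p ∈ b).card = r)
    (hxy : x < y)
    (hquasi : ∀ b₁ ∈ 𝓑, ∀ b₂ ∈ 𝓑, b₁ ≠ b₂ →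
      (b₁ ∩ b₂).card = x ∨ (b₁ ∩ b₂).card = y)
    (hvmod : v % 8 = 5) (hkmod : k % 4 = 1) (hxodd : Odd x) (hyodd : Odd y)
    (C : Submodule (ZMod 2) (Fin v ⊕ Fin 3 → ZMod 2))
    (hselfdual : ∀ z : Fin v ⊕ Fin 3 → ZMod 2,
      z ∈ C ↔ ∀ c ∈ C, ∑ i, z i * c i = 0)
    (hde : ∀ c ∈ C, 4 ∣ wt c)
    (hsub : Submodule.span (ZMod 2) (gen3 '' (𝓑 : Set (Finset (Fin v)))) ≤ C) :
    ∀ c ∈ C, c ≠ 0 → 𝓑.card + r ≤ r * wt c :=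
  selfdual_containing_C3_min_weight_general v k lam r 𝓑 hk hlam hr hvmod hkmod C hselfdual hde hsub
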